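/- arXiv:1703.08021 — 4 statements merged into one kernel-verified Lean document; each statement's English description precedes it below -/
import Mathlib

section
/- Let 0 < δ̂ ≤ δ < 1 and 0 < c_φ ≤ C_φ, and let φ : ℝ → ℝ be differentiable with c_φ·max{1,|p|}^{−1−δ} ≤ φ'(p) ≤ C_φ·max{1,|p|}^{−1−δ̂} for all p ∈ ℝ. With Φ(p) = ∫₀^p φ(τ)dτ and V(p) = pφ(p) − Φ(p), one has for every p ∈ ℝ: (c_φ/(1−δ))·(|p|^{1−δ} − (1+δ)/2) ≤ V(p) ≤ C_φ·|p|. -/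
/-!
Since `V' p = p * φ' p` and `V 0 = 0`, both bounds come from integrating pointwise bounds on
`p * φ' p` outwards from `0`, and negative `p` reduce to positive ones through `p ↦ V (-p)`.
Above, `p * max 1 p ^ (-(1 + δ̂)) ≤ 1` gives `V' ≤ C_φ`. Below, `p * φ' p ≥ c_φ p` on `[0, 1]` and
`≥ c_φ p ^ (-δ)` on `[1, ∞)` give `V p ≥ c_φ p² / 2` and
`V p ≥ c_φ / 2 + c_φ / (1 - δ) * (p ^ (1 - δ) - 1)`; the second is the claimed bound, and the first
dominates it on `[0, 1]` by the weighted AM–GM inequality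
`p ^ (1 - δ) ≤ (1 - δ) / 2 * p ^ 2 + (1 + δ) / 2`.
-/

open Set

theorem sub_le_sub_of_hasDerivAt_le {D : Set ℝ} (hD : Convex ℝ D) {f g f' g' : ℝ → ℝ}
    (hf : ∀ x ∈ D, HasDerivAt f (f' x) x) (hg : ∀ x ∈ D, HasDerivAt g (g' x) x)
    (hle : ∀ x ∈ interior D, f' x ≤ g' x) {a b : ℝ} (ha : a ∈ D) (hb : b ∈ D) (hab : a ≤ b) :
    f b - f a ≤ g b - g a := by
  have hfg : ∀ x ∈ D, HasDerivAt (g - f) (g' x - f' x) x := fun x hx => (hg x hx).sub (hf x hx)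
  have hmono : MonotoneOn (g - f) D :=
    monotoneOn_of_hasDerivWithinAt_nonneg hD
      (fun x hx => (hfg x hx).continuousAt.continuousWithinAt)
      (fun x hx => (hfg x (interior_subset hx)).hasDerivWithinAt)
      (fun x hx => sub_nonneg.2 (hle x hx))
  have := hmono ha hb hab
  simp only [Pi.sub_apply] at this
  linarith

theorem mul_max_one_rpow_neg_le_one {p e : ℝ} (hp : 0 ≤ p) (he : 0 ≤ e) :
    p * max 1 p ^ (-(1 + e)) ≤ 1 := by
  have hM : 1 ≤ max 1 p := le_max_left _ _
  calc p * max 1 p ^ (-(1 + e)) ≤ p * max 1 p ^ (-1 : ℝ) :=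
        mul_le_mul_of_nonneg_left (Real.rpow_le_rpow_of_exponent_le hM (by linarith)) hp
    _ = p / max 1 p := by rw [Real.rpow_neg_one, div_eq_mul_inv]
    _ ≤ 1 := div_le_one_of_le₀ (le_max_right _ _) (by positivity)

theorem rpow_one_sub_le_weighted_sq_add {p δ : ℝ} (hp : 0 ≤ p) (hδ₀ : -1 ≤ δ) (hδ₁ : δ ≤ 1) :
    p ^ (1 - δ) ≤ (1 - δ) / 2 * p ^ 2 + (1 + δ) / 2 := by
  have h := Real.geom_mean_le_arith_mean2_weighted (p₁ := p ^ 2) (p₂ := 1)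
    (w₁ := (1 - δ) / 2) (w₂ := (1 + δ) / 2) (by linarith) (by linarith) (sq_nonneg p)
    zero_le_one (by ring)
  have hsq : (p ^ 2) ^ ((1 - δ) / 2) = p ^ (1 - δ) := by
    rw [← Real.rpow_natCast, ← Real.rpow_mul hp, Nat.cast_ofNat, mul_div_cancel₀ _ two_ne_zero]
  rwa [Real.one_rpow, mul_one, mul_one, hsq] at h

theorem hasDerivAt_mul_sub_integral {φ : ℝ → ℝ} (hφ : Differentiable ℝ φ) (p : ℝ) :
    HasDerivAt (fun q => q * φ q - ∫ τ in (0:ℝ)..q, φ τ) (p * deriv φ p) p := by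
  have h := ((hasDerivAt_id p).mul (hφ p).hasDerivAt).sub
    (hφ.continuous.integral_hasStrictDerivAt 0 p).hasDerivAt
  refine h.congr_deriv ?_
  simp

section Potential

variable {U ψ : ℝ → ℝ} {c C δ e p : ℝ}

theorem potential_le_mul (hU0 : U 0 = 0) (hU : ∀ p, HasDerivAt U (p * ψ p) p) (hC : 0 ≤ C)
    (he : 0 ≤ e) (hψ : ∀ p, 0 ≤ p → ψ p ≤ C * max 1 p ^ (-(1 + e))) (hp : 0 ≤ p) :
    U p ≤ C * p := by
  have h := sub_le_sub_of_hasDerivAt_le (convex_Ici 0) (fun x _ => hU x)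
    (fun x _ => (hasDerivAt_id x).const_mul C) (fun x hx => ?_) self_mem_Ici hp hp
  · simpa [hU0] using h
  · rw [interior_Ici] at hx
    calc x * ψ x ≤ x * (C * max 1 x ^ (-(1 + e))) :=
          mul_le_mul_of_nonneg_left (hψ x hx.le) hx.le
      _ = C * (x * max 1 x ^ (-(1 + e))) := by ring
      _ ≤ C * 1 := by gcongr; exact mul_max_one_rpow_neg_le_one hx.le he

theorem half_mul_sq_le_potential (hU0 : U 0 = 0) (hU : ∀ p, HasDerivAt U (p * ψ p) p)
    (hψ : ∀ p ∈ Icc (0:ℝ) 1, c ≤ ψ p) (hp : p ∈ Icc (0:ℝ) 1) :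
    c / 2 * p ^ 2 ≤ U p := by
  have h := sub_le_sub_of_hasDerivAt_le (convex_Icc 0 1)
    (fun x _ => ((hasDerivAt_pow 2 x).const_mul (c / 2))) (fun x _ => hU x) (fun x hx => ?_)
    (left_mem_Icc.2 zero_le_one) hp hp.1
  · simpa [hU0] using h
  · rw [interior_Icc] at hx
    have := hψ x (Ioo_subset_Icc_self hx)
    simp only [Nat.cast_ofNat]
    nlinarith [hx.1]

theorem rpow_sub_one_le_potential (hU : ∀ p, HasDerivAt U (p * ψ p) p) (hδ : δ < 1)
    (hψ : ∀ p, 1 ≤ p → c * p ^ (-(1 + δ)) ≤ ψ p) (hp : 1 ≤ p) :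
    U 1 + c / (1 - δ) * (p ^ (1 - δ) - 1) ≤ U p := by
  have hδ' : 1 - δ ≠ 0 := by linarith
  have h := sub_le_sub_of_hasDerivAt_le (convex_Ici 1)
    (fun x hx => ((Real.hasDerivAt_rpow_const (p := 1 - δ) (Or.inl ?_)).const_mul (c / (1 - δ))))
    (fun x _ => hU x) (fun x hx => ?_) self_mem_Ici hp hp
  · rw [Real.one_rpow] at h
    linarith
  · exact (zero_lt_one.trans_le hx).ne'
  · rw [interior_Ici] at hx
    have hx0 : 0 < x := zero_lt_one.trans hx
    calc c / (1 - δ) * ((1 - δ) * x ^ (1 - δ - 1)) = x * (c * x ^ (-(1 + δ))) := by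
          rw [show 1 - δ - 1 = 1 + -(1 + δ) by ring, Real.rpow_add hx0, Real.rpow_one]
          field_simp
      _ ≤ x * ψ x := mul_le_mul_of_nonneg_left (hψ x hx.le) hx0.le

theorem rpow_sub_le_potential (hU0 : U 0 = 0) (hU : ∀ p, HasDerivAt U (p * ψ p) p)
    (hc : 0 ≤ c) (hδ₀ : -1 ≤ δ) (hδ₁ : δ < 1)
    (hψ : ∀ p, 0 ≤ p → c * max 1 p ^ (-(1 + δ)) ≤ ψ p) (hp : 0 ≤ p) :
    c / (1 - δ) * (p ^ (1 - δ) - (1 + δ) / 2) ≤ U p := by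
  have hδ : 0 < 1 - δ := by linarith
  have hsq : ∀ q ∈ Icc (0:ℝ) 1, c / 2 * q ^ 2 ≤ U q := fun q hq =>
    half_mul_sq_le_potential hU0 hU
      (fun x hx => by simpa [max_eq_left hx.2] using hψ x hx.1) hq
  rcases le_total p 1 with hp1 | hp1
  · calc c / (1 - δ) * (p ^ (1 - δ) - (1 + δ) / 2)
          ≤ c / (1 - δ) * ((1 - δ) / 2 * p ^ 2) := by
            gcongr
            linarith [rpow_one_sub_le_weighted_sq_add hp hδ₀ hδ₁.le]
        _ = c / 2 * p ^ 2 := by field_simp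
        _ ≤ U p := hsq p ⟨hp, hp1⟩
  · have h1 := hsq 1 (right_mem_Icc.2 zero_le_one)
    have h := rpow_sub_one_le_potential hU hδ₁
      (fun x hx => by simpa [max_eq_right hx] using hψ x (zero_le_one.trans hx)) hp1
    have : c / 2 - c / (1 - δ) = - (c / (1 - δ) * ((1 + δ) / 2)) := by field_simp; ring
    linarith

end Potential

/-- Two-sided bound on the potential V(p) = pφ(p) − Φ(p) under the structural
assumption c_φ max{1,|p|}^{−1−δ} ≤ φ'(p) ≤ C_φ max{1,|p|}^{−1−δ̂}. -/
theorem stmt5 (δh δ cφ Cφ : ℝ) (h1 : 0 < δh) (h2 : δh ≤ δ) (h3 : δ < 1)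
    (h4 : 0 < cφ) (h5 : cφ ≤ Cφ)
    (φ : ℝ → ℝ) (hφ : Differentiable ℝ φ)
    (hφ' : ∀ p : ℝ, cφ * (max 1 |p|) ^ (-(1 + δ)) ≤ deriv φ p ∧
        deriv φ p ≤ Cφ * (max 1 |p|) ^ (-(1 + δh)))
    (Φ V : ℝ → ℝ)
    (hΦ : ∀ p, Φ p = ∫ τ in (0:ℝ)..p, φ τ)
    (hV : ∀ p, V p = p * φ p - Φ p) :
    ∀ p : ℝ, cφ / (1 - δ) * (|p| ^ (1 - δ) - (1 + δ) / 2) ≤ V p ∧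
      V p ≤ Cφ * |p| := by
  have hV0 : V 0 = 0 := by simp [hV, hΦ]
  have hVd : ∀ p, HasDerivAt V (p * deriv φ p) p := by
    have hVeq : V = fun q => q * φ q - ∫ τ in (0:ℝ)..q, φ τ := funext fun q => by rw [hV, hΦ]
    exact hVeq ▸ hasDerivAt_mul_sub_integral hφ
  have hWd : ∀ p, HasDerivAt (fun x => V (-x)) (p * deriv φ (-p)) p := fun p =>
    ((hVd (-p)).comp p (hasDerivAt_neg p)).congr_deriv (by ring)
  have bounds : ∀ {U ψ : ℝ → ℝ}, U 0 = 0 → (∀ p, HasDerivAt U (p * ψ p) p) →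
      (∀ p, 0 ≤ p → cφ * max 1 p ^ (-(1 + δ)) ≤ ψ p ∧ ψ p ≤ Cφ * max 1 p ^ (-(1 + δh))) →
      ∀ p, 0 ≤ p → cφ / (1 - δ) * (p ^ (1 - δ) - (1 + δ) / 2) ≤ U p ∧ U p ≤ Cφ * p :=
    fun hU0 hU hψ p hp =>
      ⟨rpow_sub_le_potential hU0 hU h4.le (by linarith) h3 (fun q hq => (hψ q hq).1) hp,
        potential_le_mul hU0 hU (by linarith) h1.le (fun q hq => (hψ q hq).2) hp⟩
  intro p
  rcases le_total 0 p with hp | hp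
  · rw [abs_of_nonneg hp]
    exact bounds hV0 hVd (fun q hq => by simpa [abs_of_nonneg hq] using hφ' q) p hp
  · simpa [abs_of_nonpos hp] using bounds (by simpa using hV0) hWd
      (fun q hq => by simpa [abs_of_nonneg hq] using hφ' (-q)) (-p) (by linarith)
end

section
/- Let 0 < δ < 1, c_φ > 0, k ≥ 0, and let φ : ℝ → ℝ be differentiable with φ'(τ) ≥ c_φ·max{1,|τ|}^{−1−δ} for all τ ∈ ℝ. Define V_b(p) := ∫₀^p φ'(τ)·τ·|τ|^{2k} dτ. Then for every p ∈ ℝ: V_b(p) ≥ (c_φ/(2k+1−δ))·(|p|^{2k+1−δ} − (1+δ)/(2k+2)). -/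
/-!
Since `φ' ≥ cφ · max(1, |τ|)^(-1-δ)` and the weight `τ |τ|^(2k)` has the sign of `τ`,
the potential dominates `cφ ∫₀^p w` with `w τ = max(1, |τ|)^(-1-δ) τ |τ|^(2k)`. As `w` is odd we
may take `p ≥ 0`. On `[1, ∞)` the integrand `w = τ^(2k-δ)` is the derivative of the bound, and
`∫₀^1 w = 1/(2k+2)` is exactly the value of the bound at `1`; for `p ≤ 1` the bound follows from
`∫₀^p w = p^(2k+2)/(2k+2)` by Bernoulli's inequality.
-/

open MeasureTheory intervalIntegral Set

lemma intervalIntegral.integral_zero_neg_of_odd {f : ℝ → ℝ} (hf : Function.Odd f) (q : ℝ) :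
    ∫ τ in (0 : ℝ)..-q, f τ = ∫ τ in (0 : ℝ)..q, f τ := by
  have hcomp := integral_comp_neg (a := 0) (b := q) f
  rw [neg_zero] at hcomp
  simp only [show ∀ τ, f (-τ) = -f τ from hf, intervalIntegral.integral_neg] at hcomp
  rw [integral_symm, ← hcomp, neg_neg]

lemma intervalIntegral.integral_zero_abs_of_odd {f : ℝ → ℝ} (hf : Function.Odd f) (p : ℝ) :
    ∫ τ in (0 : ℝ)..|p|, f τ = ∫ τ in (0 : ℝ)..p, f τ := by
  rcases le_total 0 p with hp | hp
  · rw [abs_of_nonneg hp]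
  · rw [abs_of_nonpos hp, integral_zero_neg_of_odd hf]

lemma intervalIntegral.integral_mul_le_integral_mul_of_le {f g h : ℝ → ℝ} {p : ℝ}
    (hfh : IntervalIntegrable (fun τ => f τ * h τ) volume 0 p)
    (hgh : IntervalIntegrable (fun τ => g τ * h τ) volume 0 p) (hfg : ∀ τ, f τ ≤ g τ)
    (hh_nonneg : ∀ τ, 0 ≤ τ → 0 ≤ h τ) (hh_nonpos : ∀ τ, τ ≤ 0 → h τ ≤ 0) :
    ∫ τ in (0 : ℝ)..p, f τ * h τ ≤ ∫ τ in (0 : ℝ)..p, g τ * h τ := by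
  rcases le_total 0 p with hp | hp
  · exact integral_mono_on hp hfh hgh fun τ hτ =>
      mul_le_mul_of_nonneg_right (hfg τ) (hh_nonneg τ hτ.1)
  · have hmono := integral_mono_on hp hgh.symm hfh.symm fun τ hτ =>
      mul_le_mul_of_nonpos_right (hfg τ) (hh_nonpos τ hτ.2)
    rwa [integral_symm 0 p, integral_symm 0 p, neg_le_neg_iff] at hmono

namespace Potential

variable {δ k : ℝ}

/-- The integrand of the potential with `φ'` replaced by its lower bound divided by `cφ`. -/
noncomputable def lowerIntegrand (δ k τ : ℝ) : ℝ :=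
  max 1 |τ| ^ (-(1 + δ)) * (τ * |τ| ^ (2 * k))

lemma continuous_lowerIntegrand (hk : 0 ≤ k) : Continuous (lowerIntegrand δ k) := by
  have hmax : Continuous fun τ : ℝ => max 1 |τ| ^ (-(1 + δ)) :=
    (continuous_const.max continuous_abs).rpow_const fun τ =>
      Or.inl (zero_lt_one.trans_le (le_max_left 1 |τ|)).ne'
  have habs : Continuous fun τ : ℝ => |τ| ^ (2 * k) :=
    continuous_abs.rpow_const fun _ => Or.inr (by positivity)
  exact hmax.mul (continuous_id.mul habs)

lemma odd_lowerIntegrand : Function.Odd (lowerIntegrand δ k) := fun τ => by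
  simp only [lowerIntegrand, abs_neg]
  ring

lemma integral_lowerIntegrand_of_le_one (hk : 0 ≤ k) {q : ℝ} (hq₀ : 0 ≤ q) (hq₁ : q ≤ 1) :
    ∫ τ in (0 : ℝ)..q, lowerIntegrand δ k τ = q ^ (2 * k + 2) / (2 * k + 2) := by
  have hpow : EqOn (lowerIntegrand δ k) (fun τ => τ ^ (2 * k + 1)) (uIcc 0 q) := by
    intro τ hτ
    rw [uIcc_of_le hq₀] at hτ
    dsimp only
    rw [lowerIntegrand, abs_of_nonneg hτ.1, max_eq_left (hτ.2.trans hq₁), Real.one_rpow,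
      one_mul, Real.rpow_add_one' hτ.1 (by positivity), mul_comm]
  rw [integral_congr hpow, integral_rpow (Or.inl (by linarith)),
    Real.zero_rpow (by positivity)]
  ring_nf

lemma integral_lowerIntegrand_of_one_le (hδ : δ < 2 * k + 1) {q : ℝ} (hq : 1 ≤ q) :
    ∫ τ in (1 : ℝ)..q, lowerIntegrand δ k τ =
      (q ^ (2 * k + 1 - δ) - 1) / (2 * k + 1 - δ) := by
  have hpow : EqOn (lowerIntegrand δ k) (fun τ => τ ^ (2 * k - δ)) (uIcc 1 q) := by
    intro τ hτ
    rw [uIcc_of_le hq] at hτ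
    have hτ₀ : 0 < τ := zero_lt_one.trans_le hτ.1
    simp only [lowerIntegrand, abs_of_pos hτ₀, max_eq_right hτ.1]
    rw [show 2 * k - δ = -(1 + δ) + (1 + 2 * k) by ring, Real.rpow_add hτ₀,
      Real.rpow_add hτ₀, Real.rpow_one]
  have hzero : (0 : ℝ) ∉ uIcc 1 q := by
    rw [uIcc_of_le hq]
    exact notMem_Icc_of_lt zero_lt_one
  rw [integral_congr hpow, integral_rpow (Or.inr ⟨by linarith, hzero⟩), Real.one_rpow]
  ring_nf

lemma le_integral_lowerIntegrand (hk : 0 ≤ k) (hδ₀ : -1 ≤ δ) (hδ : δ < 2 * k + 1) {q : ℝ}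
    (hq : 0 ≤ q) :
    (q ^ (2 * k + 1 - δ) - (1 + δ) / (2 * k + 2)) / (2 * k + 1 - δ)
      ≤ ∫ τ in (0 : ℝ)..q, lowerIntegrand δ k τ := by
  have he : 0 < 2 * k + 1 - δ := by linarith
  have hm : 0 < 2 * k + 2 := by linarith
  rcases le_total q 1 with hq₁ | hq₁
  · rw [integral_lowerIntegrand_of_le_one hk hq hq₁, div_le_iff₀ he]
    -- Bernoulli's inequality for `(q^(2k+2))^((2k+1-δ)/(2k+2))`
    have hbernoulli := rpow_one_add_le_one_add_mul_self
      (s := q ^ (2 * k + 2) - 1) (p := (2 * k + 1 - δ) / (2 * k + 2))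
      (by linarith [Real.rpow_nonneg hq (2 * k + 2)]) (by positivity)
      ((div_le_one hm).2 (by linarith))
    rw [add_sub_cancel, ← Real.rpow_mul hq, mul_div_cancel₀ _ hm.ne'] at hbernoulli
    have hexcess : (1 + δ) / (2 * k + 2) = 1 - (2 * k + 1 - δ) / (2 * k + 2) := by
      rw [eq_sub_iff_add_eq, ← add_div, div_eq_one_iff_eq hm.ne']
      ring
    linear_combination hbernoulli - hexcess
  · rw [← integral_add_adjacent_intervals ((continuous_lowerIntegrand hk).intervalIntegrable 0 1)
      ((continuous_lowerIntegrand hk).intervalIntegrable 1 q),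
      integral_lowerIntegrand_of_le_one hk zero_le_one le_rfl,
      integral_lowerIntegrand_of_one_le hδ hq₁, Real.one_rpow]
    refine le_of_eq ?_
    field_simp
    ring

end Potential

open Potential in
/-- Lower bound for the weighted potential V_b(p) = ∫₀^p φ'(τ) τ |τ|^{2k} dτ. -/
theorem stmt6 (δ cφ k : ℝ) (hδ1 : 0 < δ) (hδ2 : δ < 1) (hcφ : 0 < cφ) (hk : 0 ≤ k)
    (φ : ℝ → ℝ) (hφ : Differentiable ℝ φ)
    (hφ' : ∀ τ : ℝ, cφ * (max 1 |τ|) ^ (-(1 + δ)) ≤ deriv φ τ)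
    (Vb : ℝ → ℝ)
    (hVb : ∀ p, Vb p = ∫ τ in (0:ℝ)..p, deriv φ τ * τ * |τ| ^ (2 * k)) :
    ∀ p : ℝ,
      cφ / (2 * k + 1 - δ) * (|p| ^ (2 * k + 1 - δ) - (1 + δ) / (2 * k + 2))
        ≤ Vb p := by
  intro p
  have hsigned : Continuous fun τ : ℝ => τ * |τ| ^ (2 * k) :=
    continuous_id.mul (continuous_abs.rpow_const fun _ => Or.inr (by positivity))
  have hderiv : IntervalIntegrable (deriv φ) volume 0 p :=
    intervalIntegrable_deriv_of_nonneg hφ.continuous.continuousOn (fun τ _ => (hφ τ).hasDerivAt)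
      fun τ _ => le_trans (by positivity) (hφ' τ)
  calc cφ / (2 * k + 1 - δ) * (|p| ^ (2 * k + 1 - δ) - (1 + δ) / (2 * k + 2))
      = cφ * ((|p| ^ (2 * k + 1 - δ) - (1 + δ) / (2 * k + 2)) / (2 * k + 1 - δ)) := by ring
    _ ≤ cφ * ∫ τ in (0 : ℝ)..|p|, lowerIntegrand δ k τ := by
        gcongr
        exact le_integral_lowerIntegrand hk (by linarith) (by linarith) (abs_nonneg p)
    _ = ∫ τ in (0 : ℝ)..p, cφ * max 1 |τ| ^ (-(1 + δ)) * (τ * |τ| ^ (2 * k)) := by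
        rw [integral_zero_abs_of_odd odd_lowerIntegrand, ← intervalIntegral.integral_const_mul]
        simp only [lowerIntegrand, mul_assoc]
    _ ≤ ∫ τ in (0 : ℝ)..p, deriv φ τ * (τ * |τ| ^ (2 * k)) := by
        refine integral_mul_le_integral_mul_of_le ?_ (hderiv.mul_continuousOn hsigned.continuousOn)
          hφ' (fun τ hτ => mul_nonneg hτ (by positivity))
          fun τ hτ => mul_nonpos_of_nonpos_of_nonneg hτ (by positivity)
        simpa only [lowerIntegrand, mul_assoc] using
          ((continuous_lowerIntegrand hk).intervalIntegrable 0 p).const_mul cφ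
    _ = Vb p := by simp only [hVb, mul_assoc]
end

section
/- Let φ : ℝ → ℝ be differentiable with φ'(p) > 0 for every p, Φ(p) = ∫₀^p φ(τ)dτ, and V(p) = pφ(p) − Φ(p). Let b : ℝ → ℝ be differentiable, even, with b(τ) ≥ 0 for all τ and b'(τ) ≥ 0 for τ ≥ 0. Define Ψ(p) := φ(p)·p·b(p) − ∫₀^p φ'(τ)·τ·b(τ)dτ − Φ(p)·b(p). Then for every p ∈ ℝ: Ψ(p) = ∫₀^p V(τ)b'(τ)dτ, and 0 ≤ Ψ(p) ≤ V(p)·b(p). -/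
/-!
Since `V' = p φ'`, the potential `V` vanishes at `0` and its derivative has the sign of `p`,
so `V ≥ 0`. Evenness makes `b'` odd, so `b'` also has the sign of `p`. Integrating by parts,
`∫₀^p V b' = V(p) b(p) − ∫₀^p φ'(τ) τ b(τ) dτ`, which is `Ψ(p)`. Both integrands have the sign
of the variable, so both integrals from `0` to `p` are nonnegative, whatever the sign of `p`.
No continuity of `φ'` or `b'` is available: their integrability comes from their being
derivatives of constant sign on each side of `0`.
-/

open MeasureTheory

def HasSignOfArg (f : ℝ → ℝ) : Prop :=
  ∀ x, (0 ≤ x → 0 ≤ f x) ∧ (x ≤ 0 → f x ≤ 0)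

namespace HasSignOfArg

variable {f g : ℝ → ℝ}

theorem id : HasSignOfArg fun x => x :=
  fun _ => ⟨fun h => h, fun h => h⟩

theorem nonneg_mul (hf : HasSignOfArg f) (hg : ∀ x, 0 ≤ g x) :
    HasSignOfArg fun x => g x * f x :=
  fun x => ⟨fun hx => mul_nonneg (hg x) ((hf x).1 hx),
    fun hx => mul_nonpos_of_nonneg_of_nonpos (hg x) ((hf x).2 hx)⟩

theorem mul_nonneg (hf : HasSignOfArg f) (hg : ∀ x, 0 ≤ g x) :
    HasSignOfArg fun x => f x * g x := by
  simpa only [mul_comm] using hf.nonneg_mul hg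

theorem integral_nonneg (hf : HasSignOfArg f) (p : ℝ) : 0 ≤ ∫ x in (0:ℝ)..p, f x := by
  rcases le_total 0 p with hp | hp
  · exact intervalIntegral.integral_nonneg hp fun x hx => (hf x).1 hx.1
  · have h := intervalIntegral.integral_nonneg (μ := volume) hp
      fun x hx => neg_nonneg.2 ((hf x).2 hx.2)
    rw [intervalIntegral.integral_neg] at h
    rwa [intervalIntegral.integral_symm]

theorem intervalIntegrable (hf : HasSignOfArg f) (hg : ∀ x, HasDerivAt g (f x) x) (p : ℝ) :
    IntervalIntegrable f volume 0 p := by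
  have hcont : Continuous g := continuous_iff_continuousAt.2 fun x => (hg x).continuousAt
  rcases le_total 0 p with hp | hp
  · refine intervalIntegral.intervalIntegrable_deriv_of_nonneg hcont.continuousOn
      (fun x _ => hg x) fun x hx => (hf x).1 ?_
    rw [min_eq_left hp] at hx
    exact hx.1.le
  · have h := intervalIntegral.intervalIntegrable_deriv_of_nonneg (a := 0) (b := p)
      (g' := fun x => -f x) hcont.neg.continuousOn (fun x _ => (hg x).neg)
      fun x hx => neg_nonneg.2 ((hf x).2 ?_)
    · simpa only [Pi.neg_def, neg_neg] using h.neg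
    · rw [max_eq_left hp] at hx
      exact hx.2.le

theorem nonneg_of_hasDerivAt (hf : HasSignOfArg f) (hg : ∀ x, HasDerivAt g (f x) x)
    (hg0 : g 0 = 0) (x : ℝ) : 0 ≤ g x := by
  have h := intervalIntegral.integral_eq_sub_of_hasDerivAt (fun y _ => hg y)
    (hf.intervalIntegrable hg x)
  rw [hg0, sub_zero] at h
  exact h ▸ hf.integral_nonneg x

end HasSignOfArg

theorem hasSignOfArg_deriv_of_even {b : ℝ → ℝ} (heven : ∀ x, b (-x) = b x)
    (hmono : ∀ x, 0 ≤ x → 0 ≤ deriv b x) : HasSignOfArg (deriv b) := by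
  refine fun x => ⟨hmono x, fun hx => ?_⟩
  have hodd := deriv_comp_neg b x
  simp only [heven] at hodd
  linarith [hmono (-x) (neg_nonneg.2 hx)]

/-- The remainder Ψ(p) = φ(p)p b(p) − ∫₀^p φ'(τ)τ b(τ)dτ − Φ(p)b(p) satisfies
Ψ(p) = ∫₀^p V(τ) b'(τ) dτ and 0 ≤ Ψ(p) ≤ V(p) b(p). -/
theorem stmt7 (φ : ℝ → ℝ) (hφ : Differentiable ℝ φ) (hφ' : ∀ p, 0 < deriv φ p)
    (Φ V : ℝ → ℝ)
    (hΦ : ∀ p, Φ p = ∫ τ in (0:ℝ)..p, φ τ)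
    (hV : ∀ p, V p = p * φ p - Φ p)
    (b : ℝ → ℝ) (hb : Differentiable ℝ b) (hbeven : ∀ τ, b (-τ) = b τ)
    (hbnn : ∀ τ, 0 ≤ b τ) (hb' : ∀ τ : ℝ, 0 ≤ τ → 0 ≤ deriv b τ)
    (Ψ : ℝ → ℝ)
    (hΨ : ∀ p, Ψ p = φ p * p * b p - (∫ τ in (0:ℝ)..p, deriv φ τ * τ * b τ)
        - Φ p * b p) :
    ∀ p : ℝ, Ψ p = (∫ τ in (0:ℝ)..p, V τ * deriv b τ) ∧
      0 ≤ Ψ p ∧ Ψ p ≤ V p * b p := by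
  intro p
  have hΦ' (x : ℝ) : HasDerivAt Φ (φ x) x :=
    funext hΦ ▸ (hφ.continuous.integral_hasStrictDerivAt 0 x).hasDerivAt
  have hV' (x : ℝ) : HasDerivAt V (deriv φ x * x) x := by
    rw [funext hV]
    exact (((hasDerivAt_id' x).fun_mul (hφ x).hasDerivAt).fun_sub (hΦ' x)).congr_deriv
      (by ring)
  have hV0 : V 0 = 0 := by simp [hV, hΦ]
  have hV'sign : HasSignOfArg fun x => deriv φ x * x :=
    HasSignOfArg.id.nonneg_mul fun x => (hφ' x).le
  have hb'sign : HasSignOfArg (deriv b) := hasSignOfArg_deriv_of_even hbeven hb'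
  have hVb'sign : HasSignOfArg fun x => V x * deriv b x :=
    hb'sign.nonneg_mul (hV'sign.nonneg_of_hasDerivAt hV' hV0)
  have hparts := intervalIntegral.integral_mul_deriv_eq_deriv_mul (fun x _ => hV' x)
    (fun x _ => (hb x).hasDerivAt) (hV'sign.intervalIntegrable hV' p)
    (hb'sign.intervalIntegrable (fun x => (hb x).hasDerivAt) p)
  have hΨp : Ψ p = ∫ τ in (0:ℝ)..p, V τ * deriv b τ := by
    rw [hΨ, hparts, hV0, hV]
    ring
  refine ⟨hΨp, hΨp ▸ hVb'sign.integral_nonneg p, ?_⟩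
  rw [hΨp, hparts, hV0, zero_mul, sub_zero, sub_le_self_iff]
  exact (hV'sign.mul_nonneg hbnn).integral_nonneg p
end

section
/- Let R > 0, 0 < δ < 1, 0 < c_φ ≤ C_φ, 0 < c_μ ≤ C_μ. Let φ : ℝ → ℝ be differentiable with c_φ·max{1,|τ|}^{−1−δ} ≤ φ'(τ) ≤ C_φ for all τ, and let μ : ℝ → ℝ be continuous with c_μ ≤ μ(τ) ≤ C_μ for all τ. Define M(p) = ∫₀^p μ(τ)dτ and V_{R,M}(p) = ∫₀^p φ'(τ)M(τ)dτ + ∫₀^p 1_{{|τ|>R}}·M(τ)dτ. Then with c_{R,μ} := (c_μ/2)·min{1, c_φ·max{1,R}^{−1−δ}} and C_{R,μ} := (C_μ/2)·(C_φ + 1), one has c_{R,μ}·p² ≤ V_{R,M}(p) ≤ C_{R,μ}·p² for every p ∈ ℝ. -/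
/-!
Write `V(p) = ∫₀^p w M` with the weight `w = φ' + 1_{|τ| > R}`. The weight lies between
`c = min 1 (c_φ max{1,R}^{-1-δ})` and `C_φ + 1`: for `|τ| ≤ R` the lower bound on `φ'` is at least
`c_φ max{1,R}^{-1-δ}`, and for `|τ| > R` the indicator alone contributes `1`. Since `μ` lies in
`[c_μ, C_μ]`, `M(τ)` has the sign of `τ` with `c_μ τ² ≤ τ M(τ) ≤ C_μ τ²`, so `τ w(τ) M(τ)` lies
between `c c_μ τ²` and `(C_φ + 1) C_μ τ²`. Integrating such sign-aware bounds from `0` to `p`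
produces the factor `1/2`.
-/

open MeasureTheory Set

theorem intervalIntegral_nonneg_of_forall_sub_mul_nonneg {f : ℝ → ℝ} {a b : ℝ}
    (hf : ∀ τ, 0 ≤ (τ - a) * f τ) : 0 ≤ ∫ τ in a..b, f τ := by
  rcases le_total a b with hab | hba
  · rw [intervalIntegral.integral_of_le hab, integral_Ioc_eq_integral_Ioo]
    exact setIntegral_nonneg measurableSet_Ioo fun τ hτ =>
      nonneg_of_mul_nonneg_right (hf τ) (sub_pos.2 hτ.1)
  · rw [intervalIntegral.integral_symm, neg_nonneg, intervalIntegral.integral_of_le hba,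
      integral_Ioc_eq_integral_Ioo]
    exact setIntegral_nonpos measurableSet_Ioo fun τ hτ =>
      nonpos_of_mul_nonneg_right (hf τ) (sub_neg.2 hτ.2)

theorem sub_mul_intervalIntegral_nonneg {f : ℝ → ℝ} {a b : ℝ} (hf : ∀ τ, 0 ≤ f τ) :
    0 ≤ (b - a) * ∫ τ in a..b, f τ := by
  rcases le_total a b with hab | hba
  · exact mul_nonneg (sub_nonneg.2 hab) (intervalIntegral.integral_nonneg_of_forall hab hf)
  · rw [intervalIntegral.integral_symm, mul_neg, ← neg_mul, neg_sub]
    exact mul_nonneg (sub_nonneg.2 hba) (intervalIntegral.integral_nonneg_of_forall hba hf)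

theorem sq_le_mul_intervalIntegral {f : ℝ → ℝ} {c C p : ℝ}
    (hf : IntervalIntegrable f volume 0 p) (hfb : ∀ τ, c ≤ f τ ∧ f τ ≤ C) :
    c * p ^ 2 ≤ p * ∫ τ in 0..p, f τ ∧ p * ∫ τ in 0..p, f τ ≤ C * p ^ 2 := by
  have hlow := sub_mul_intervalIntegral_nonneg (a := 0) (b := p) fun τ => sub_nonneg.2 (hfb τ).1
  have hupp := sub_mul_intervalIntegral_nonneg (a := 0) (b := p) fun τ => sub_nonneg.2 (hfb τ).2
  rw [intervalIntegral.integral_sub hf intervalIntegrable_const] at hlow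
  rw [intervalIntegral.integral_sub intervalIntegrable_const hf] at hupp
  rw [intervalIntegral.integral_const, smul_eq_mul, sub_zero] at hlow hupp
  constructor <;> nlinarith

theorem sq_le_intervalIntegral_of_sq_le_mul {f : ℝ → ℝ} {c C p : ℝ}
    (hf : IntervalIntegrable f volume 0 p) (hfb : ∀ τ, c * τ ^ 2 ≤ τ * f τ ∧ τ * f τ ≤ C * τ ^ 2) :
    c / 2 * p ^ 2 ≤ ∫ τ in 0..p, f τ ∧ ∫ τ in 0..p, f τ ≤ C / 2 * p ^ 2 := by
  have hlin (k : ℝ) : IntervalIntegrable (fun τ => k * τ) volume 0 p :=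
    (continuous_const_mul k).intervalIntegrable 0 p
  have hlow := intervalIntegral_nonneg_of_forall_sub_mul_nonneg (a := 0) (b := p)
    (f := fun τ => f τ - c * τ) fun τ => by nlinarith [hfb τ]
  have hupp := intervalIntegral_nonneg_of_forall_sub_mul_nonneg (a := 0) (b := p)
    (f := fun τ => C * τ - f τ) fun τ => by nlinarith [hfb τ]
  rw [intervalIntegral.integral_sub hf (hlin c)] at hlow
  rw [intervalIntegral.integral_sub (hlin C) hf] at hupp
  rw [intervalIntegral.integral_const_mul, integral_id] at hlow hupp
  constructor <;> linarith

theorem min_le_add_indicator_of_rpow_le {R δ cφ d τ : ℝ} (hδ : 0 ≤ 1 + δ) (hcφ : 0 ≤ cφ)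
    (hd : cφ * (max 1 |τ|) ^ (-(1 + δ)) ≤ d) :
    min 1 (cφ * (max 1 R) ^ (-(1 + δ))) ≤ d + {τ : ℝ | R < |τ|}.indicator 1 τ := by
  have hpos : (0 : ℝ) < max 1 |τ| := lt_max_of_lt_left one_pos
  by_cases hτ : R < |τ|
  · have : 0 ≤ d := le_trans (by positivity) hd
    rw [indicator_of_mem (show τ ∈ {τ : ℝ | R < |τ|} from hτ), Pi.one_apply]
    linarith [min_le_left 1 (cφ * (max 1 R) ^ (-(1 + δ)))]
  · rw [indicator_of_notMem (show τ ∉ {τ : ℝ | R < |τ|} from hτ), add_zero]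
    refine (min_le_right _ _).trans (le_trans ?_ hd)
    exact mul_le_mul_of_nonneg_left (Real.rpow_le_rpow_of_nonpos hpos
      (max_le_max le_rfl (not_lt.1 hτ)) (by linarith)) hcφ

theorem sq_le_mul_mul_of_sq_le_mul {w m τ c C a A : ℝ} (hc : 0 ≤ c) (ha : 0 ≤ a)
    (hw : c ≤ w ∧ w ≤ C) (hm : a * τ ^ 2 ≤ τ * m ∧ τ * m ≤ A * τ ^ 2) :
    c * a * τ ^ 2 ≤ τ * (w * m) ∧ τ * (w * m) ≤ C * A * τ ^ 2 := by
  have hτm : 0 ≤ τ * m := le_trans (by positivity) hm.1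
  rw [mul_left_comm]
  constructor
  · calc c * a * τ ^ 2 = c * (a * τ ^ 2) := mul_assoc c a _
      _ ≤ c * (τ * m) := mul_le_mul_of_nonneg_left hm.1 hc
      _ ≤ w * (τ * m) := mul_le_mul_of_nonneg_right hw.1 hτm
  · calc w * (τ * m) ≤ C * (τ * m) := mul_le_mul_of_nonneg_right hw.2 hτm
      _ ≤ C * (A * τ ^ 2) := mul_le_mul_of_nonneg_left hm.2 (hc.trans (hw.1.trans hw.2))
      _ = C * A * τ ^ 2 := (mul_assoc C A _).symm

theorem intervalIntegrable_mul_of_norm_le {w g : ℝ → ℝ} {C a b : ℝ} (hw : Measurable w)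
    (hwb : ∀ τ, ‖w τ‖ ≤ C) (hg : Continuous g) :
    IntervalIntegrable (fun τ => w τ * g τ) volume a b :=
  ((intervalIntegrable_const (c := C)).mono_fun hw.aestronglyMeasurable
    (ae_of_all _ fun τ => (hwb τ).trans (Real.le_norm_self C))).mul_continuousOn hg.continuousOn

theorem stmt8_general (R δ cφ Cφ cμ Cμ : ℝ) (hδ1 : 0 < δ)
    (hcφ : 0 < cφ) (hcμ : 0 < cμ)
    (φ : ℝ → ℝ)
    (hφ' : ∀ τ : ℝ, cφ * (max 1 |τ|) ^ (-(1 + δ)) ≤ deriv φ τ ∧ deriv φ τ ≤ Cφ)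
    (μ : ℝ → ℝ) (hμ : Continuous μ) (hμb : ∀ τ, cμ ≤ μ τ ∧ μ τ ≤ Cμ)
    (M VRM : ℝ → ℝ)
    (hM : ∀ p, M p = ∫ τ in (0:ℝ)..p, μ τ)
    (hVRM : ∀ p, VRM p = (∫ τ in (0:ℝ)..p, deriv φ τ * M τ)
        + ∫ τ in (0:ℝ)..p, Set.indicator {τ : ℝ | R < |τ|} M τ) :
    ∀ p : ℝ,
      (cμ / 2) * min 1 (cφ * (max 1 R) ^ (-(1 + δ))) * p^2 ≤ VRM p ∧
      VRM p ≤ (Cμ / 2) * (Cφ + 1) * p^2 := by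
  intro p
  set S : Set ℝ := {τ : ℝ | R < |τ|}
  set c := min 1 (cφ * (max 1 R) ^ (-(1 + δ)))
  have hMc : Continuous M := by
    rw [funext hM]
    exact intervalIntegral.continuous_primitive (fun a b => hμ.intervalIntegrable a b) 0
  have hMb (τ : ℝ) : cμ * τ ^ 2 ≤ τ * M τ ∧ τ * M τ ≤ Cμ * τ ^ 2 :=
    hM τ ▸ sq_le_mul_intervalIntegral (hμ.intervalIntegrable 0 τ) hμb
  have hint₁ : IntervalIntegrable (fun τ => deriv φ τ * M τ) volume 0 p :=
    intervalIntegrable_mul_of_norm_le (measurable_deriv φ) (fun τ =>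
      (Real.norm_of_nonneg ((by positivity : (0 : ℝ) ≤ _).trans (hφ' τ).1)).trans_le (hφ' τ).2) hMc
  have hint₂ : IntervalIntegrable (fun τ => S.indicator 1 τ * M τ) volume 0 p :=
    intervalIntegrable_mul_of_norm_le (measurable_const.indicator
      (measurableSet_lt measurable_const measurable_abs))
      (fun τ => (norm_indicator_le_norm_self 1 τ).trans_eq norm_one) hMc
  have hV : VRM p = ∫ τ in 0..p, deriv φ τ * M τ + S.indicator 1 τ * M τ := by
    rw [hVRM, intervalIntegral.integral_add hint₁ hint₂]
    congr 2 with τ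
    by_cases hτ : τ ∈ S <;> simp [hτ]
  have hw (τ : ℝ) : c ≤ deriv φ τ + S.indicator 1 τ ∧ deriv φ τ + S.indicator 1 τ ≤ Cφ + 1 :=
    ⟨min_le_add_indicator_of_rpow_le (by linarith) hcφ.le (hφ' τ).1,
      add_le_add (hφ' τ).2 (indicator_le_self' (fun _ _ => zero_le_one) τ)⟩
  obtain ⟨hlow, hupp⟩ := sq_le_intervalIntegral_of_sq_le_mul (hint₁.add hint₂) fun τ => by
    rw [← add_mul]; exact sq_le_mul_mul_of_sq_le_mul (by positivity) hcμ.le (hw τ) (hMb τ)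
  rw [hV]
  constructor <;> linarith

/-- Quadratic two-sided bound for the potential V_{R,M}(p) arising when the
cut-off mass balance equation is tested with v = M(p). -/
theorem stmt8 (R δ cφ Cφ cμ Cμ : ℝ) (hR : 0 < R) (hδ1 : 0 < δ) (hδ2 : δ < 1)
    (hcφ : 0 < cφ) (hcC : cφ ≤ Cφ) (hcμ : 0 < cμ) (hμC : cμ ≤ Cμ)
    (φ : ℝ → ℝ) (hφ : Differentiable ℝ φ)
    (hφ' : ∀ τ : ℝ, cφ * (max 1 |τ|) ^ (-(1 + δ)) ≤ deriv φ τ ∧ deriv φ τ ≤ Cφ)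
    (μ : ℝ → ℝ) (hμ : Continuous μ) (hμb : ∀ τ, cμ ≤ μ τ ∧ μ τ ≤ Cμ)
    (M VRM : ℝ → ℝ)
    (hM : ∀ p, M p = ∫ τ in (0:ℝ)..p, μ τ)
    (hVRM : ∀ p, VRM p = (∫ τ in (0:ℝ)..p, deriv φ τ * M τ)
        + ∫ τ in (0:ℝ)..p, Set.indicator {τ : ℝ | R < |τ|} M τ) :
    ∀ p : ℝ,
      (cμ / 2) * min 1 (cφ * (max 1 R) ^ (-(1 + δ))) * p^2 ≤ VRM p ∧
      VRM p ≤ (Cμ / 2) * (Cφ + 1) * p^2 :=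
  stmt8_general R δ cφ Cφ cμ Cμ hδ1 hcφ hcμ φ hφ' μ hμ hμb M VRM hM hVRM
end
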